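/- arXiv:2301.05476 — 5 statements merged into one kernel-verified Lean document; each statement's English description precedes it below -/
import Mathlib

section
/- Let Q be a finite quiver, let d ≥ 2, and let ρ be a d-covering set of paths of Q, each of length d, such that for every m ≥ 2 every element of R^m has length δ(m) (as holds when the monomial algebra KQ/(ρ) is d-Koszul). Then for every n ≥ 2 and every R ∈ R^n, every subpath of R of length d belongs to ρ. -/
open Quiver

universe u v

variable {V : Type u} [Quiver.{v + 1} V]

/-- The type of paths of a quiver, bundled with their endpoints. -/
abbrev SPath (V : Type u) [Quiver.{v + 1} V] := Σ a b : V, Quiver.Path a b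

/-- The type of arrows of a quiver, bundled with their endpoints. -/
abbrev SArrow (V : Type u) [Quiver.{v + 1} V] := Σ a b : V, a ⟶ b

/-- A set of paths in a quiver, given as a predicate on paths with arbitrary endpoints. -/
abbrev PathSet (V : Type u) [Quiver.{v + 1} V] := ∀ ⦃a b : V⦄, Quiver.Path a b → Prop

/-- `p` is a prefix of `q`. -/
def IsPrefixP {a b c : V} (p : Quiver.Path a b) (q : Quiver.Path a c) : Prop :=
  ∃ p' : Quiver.Path b c, q = p.comp p'

/-- `p` is a suffix of `q`. -/
def IsSuffixP {a b c : V} (p : Quiver.Path b c) (q : Quiver.Path a c) : Prop :=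
  ∃ p' : Quiver.Path a b, q = p'.comp p

/-- `p` is a subpath of `q`. -/
def IsSubpathP {b c a e : V} (p : Quiver.Path b c) (q : Quiver.Path a e) : Prop :=
  ∃ (u : Quiver.Path a b) (v : Quiver.Path c e), q = (u.comp p).comp v

/-- `q` overlaps `p` with overlap `p.comp u`: there are paths `u`, `v` with
`pu = vq` and `1 ≤ ℓ(u) < ℓ(q)`. -/
def OverlapsWith {x y a b : V} (q : Quiver.Path x y) (p : Quiver.Path a b)
    (u : Quiver.Path b y) : Prop :=
  ∃ v : Quiver.Path a x, p.comp u = v.comp q ∧ 1 ≤ u.length ∧ u.length < q.length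

/-- `q` properly overlaps `p` with overlap `p.comp u`: additionally `ℓ(v) ≥ 1`. -/
def ProperlyOverlapsWith {x y a b : V} (q : Quiver.Path x y) (p : Quiver.Path a b)
    (u : Quiver.Path b y) : Prop :=
  ∃ v : Quiver.Path a x, p.comp u = v.comp q ∧ 1 ≤ u.length ∧ u.length < q.length ∧
    1 ≤ v.length

/-- `q` properly overlaps `p` (with some overlap). -/
def ProperlyOverlaps {x y a b : V} (q : Quiver.Path x y) (p : Quiver.Path a b) : Prop :=
  ∃ u : Quiver.Path b y, ProperlyOverlapsWith q p u

/-- `ρ` is `d`-covering: whenever `pq ∈ ρ`, `qr ∈ ρ` and `ℓ(q) ≥ 1`, every subpath of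
`pqr` of length `d` lies in `ρ`. -/
def DCovering (d : ℕ) (ρ : PathSet V) : Prop :=
  ∀ ⦃a b c e : V⦄ (p : Quiver.Path a b) (q : Quiver.Path b c) (r : Quiver.Path c e),
    ρ (p.comp q) → ρ (q.comp r) → 1 ≤ q.length →
    ∀ ⦃x y : V⦄ (s : Quiver.Path x y), s.length = d →
      IsSubpathP s ((p.comp q).comp r) → ρ s

/-- The sets `R^n` of (iterated maximal) overlaps: `R^0` = trivial paths, `R^1` = arrows,
`R^2 = ρ`, and for `n ≥ 3`, `R^n` consists of the paths `R^{n-1}u` where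
`R^{n-1} = R^{n-2}p ∈ R^{n-1}`, some element of `ρ` overlaps `p` with overlap `pu`,
and no element of `ρ` overlaps `p` with overlap a proper prefix of `pu`. -/
def RSet (ρ : PathSet V) : ℕ → PathSet V
  | 0 => fun _ _ p => p.length = 0
  | 1 => fun _ _ p => p.length = 1
  | 2 => ρ
  | n + 3 => fun a e R =>
      ∃ (c : V) (Rp : Quiver.Path a c) (u : Quiver.Path c e),
        RSet ρ (n + 2) Rp ∧ R = Rp.comp u ∧
        ∃ (b : V) (Rpp : Quiver.Path a b) (p : Quiver.Path b c),
          RSet ρ (n + 1) Rpp ∧ Rp = Rpp.comp p ∧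
          (∃ (x : V) (q : Quiver.Path x e), ρ q ∧ OverlapsWith q p u) ∧
          ∀ (x y : V) (q : Quiver.Path x y) (u' : Quiver.Path c y),
            ρ q → OverlapsWith q p u' →
            ¬(IsPrefixP (p.comp u') (p.comp u) ∧ u'.length < u.length)

/-- `δ(n) = (n/2)d` if `n` is even, `((n-1)/2)d + 1` if `n` is odd. -/
def deltaF (d n : ℕ) : ℕ := if n % 2 = 0 then n / 2 * d else (n - 1) / 2 * d + 1

/-- The `m`-th power of a closed path. -/
def cpow {a : V} (T : Quiver.Path a a) : ℕ → Quiver.Path a a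
  | 0 => Quiver.Path.nil
  | n + 1 => (cpow T n).comp T

/-- The list of arrows of a path, in order. -/
def arrowList {a : V} : ∀ {b : V}, Quiver.Path a b → List (SArrow V)
  | _, Quiver.Path.nil => []
  | _, Quiver.Path.cons p e => arrowList p ++ [⟨_, _, e⟩]

/-- A closed trail: a nontrivial closed path with pairwise distinct arrows. -/
def IsClosedTrail {a : V} (T : Quiver.Path a a) : Prop :=
  1 ≤ T.length ∧ (arrowList T).Nodup

/-- `q` lies on the closed path `T`: `q` is a subpath of `T^m` for some `m ≥ 1`. -/
def LiesOn {x y a : V} (q : Quiver.Path x y) (T : Quiver.Path a a) : Prop :=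
  ∃ m : ℕ, 1 ≤ m ∧ IsSubpathP q (cpow T m)

/-- `ρ_T ⊆ ρ`: every path of length `d` lying on `T` belongs to `ρ`. -/
def RhoTSub (d : ℕ) (ρ : PathSet V) {a : V} (T : Quiver.Path a a) : Prop :=
  ∀ ⦃x y : V⦄ (q : Quiver.Path x y), q.length = d → LiesOn q T → ρ q

/-- `SegChain A L a b p` : the path `p` decomposes as the composite of the listed
segments, each of length `A`. -/
inductive SegChain (A : ℕ) : List (SPath V) → (a b : V) → Quiver.Path a b → Prop
  | nil (a : V) : SegChain A [] a a Quiver.Path.nil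
  | cons {a b c : V} (α : Quiver.Path a b) (hα : α.length = A) {p : Quiver.Path b c}
      {L : List (SPath V)} (hp : SegChain A L b c p) :
      SegChain A (⟨a, b, α⟩ :: L) a c (α.comp p)

/-- An `A`-path: a path which decomposes into segments of length `A`. -/
def IsAPath (A : ℕ) {a b : V} (p : Quiver.Path a b) : Prop :=
  ∃ L : List (SPath V), SegChain A L a b p

/-- `p` is an `A`-subpath of `q`: a subpath which is an `A`-path starting at a position
that is a multiple of `A`. -/
def IsASubpath (A : ℕ) {b c a e : V} (p : Quiver.Path b c) (q : Quiver.Path a e) : Prop :=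
  ∃ (u : Quiver.Path a b) (v : Quiver.Path c e),
    q = (u.comp p).comp v ∧ A ∣ u.length ∧ IsAPath A p

/-- A closed `A`-trail: a nontrivial closed `A`-path with pairwise distinct `A`-segments. -/
def IsClosedATrail (A : ℕ) {a : V} (T : Quiver.Path a a) : Prop :=
  ∃ L : List (SPath V), SegChain A L a a T ∧ L ≠ [] ∧ L.Nodup

/-- The `A`-path `q` lies on the closed `A`-path `T`: `q` is an `A`-subpath of `T^m` for
some `m ≥ 1`. -/
def ALiesOn (A : ℕ) {x y a : V} (q : Quiver.Path x y) (T : Quiver.Path a a) : Prop :=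
  ∃ m : ℕ, 1 ≤ m ∧ IsASubpath A q (cpow T m)

/-- `ρ_T ⊆ ρ` in the `(D,A)`-setting: every path of length `D` which lies on `T` as an
`A`-path belongs to `ρ`. -/
def ARhoTSub (D A : ℕ) (ρ : PathSet V) {a : V} (T : Quiver.Path a a) : Prop :=
  ∀ ⦃x y : V⦄ (q : Quiver.Path x y), q.length = D → ALiesOn A q T → ρ q

/-- The `(D,A)`-overlap property: every path in `ρ` has length `D`, and whenever
`R₂ ∈ ρ` properly overlaps `R₁ ∈ ρ` with overlap `R₁u`, then `ℓ(u) ≥ A` and some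
`R₃ ∈ ρ` properly overlaps `R₁` with overlap `R₁u'` where `ℓ(u') = A` and `u'` is a
prefix of `u`. -/
def DAOverlapProperty (D A : ℕ) (ρ : PathSet V) : Prop :=
  (∀ ⦃a b : V⦄ (p : Quiver.Path a b), ρ p → p.length = D) ∧
  ∀ ⦃a b x y : V⦄ (R₁ : Quiver.Path a b) (R₂ : Quiver.Path x y) (u : Quiver.Path b y),
    ρ R₁ → ρ R₂ → ProperlyOverlapsWith R₂ R₁ u →
    A ≤ u.length ∧
      ∃ (y' : V) (x' : V) (R₃ : Quiver.Path x' y') (u' : Quiver.Path b y'),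
        ρ R₃ ∧ ProperlyOverlapsWith R₃ R₁ u' ∧ u'.length = A ∧ IsPrefixP u' u

/-- Condition (C1), part (1), for a loop `α`. -/
def CondLoop (d : ℕ) (ρ : PathSet V) {v : V} (α : v ⟶ v) : Prop :=
  ρ (cpow (Quiver.Hom.toPath α) d) ∧
  (∀ ⦃w : V⦄ (β : v ⟶ w), (⟨v, w, β⟩ : SArrow V) ≠ ⟨v, v, α⟩ →
      ¬ ρ ((cpow (Quiver.Hom.toPath α) (d - 1)).comp (Quiver.Hom.toPath β))) ∧
  (∀ ⦃w : V⦄ (β : w ⟶ v), (⟨w, v, β⟩ : SArrow V) ≠ ⟨v, v, α⟩ →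
      ¬ ρ ((Quiver.Hom.toPath β).comp (cpow (Quiver.Hom.toPath α) (d - 1))))

/-- Condition (C1): (1) every loop `α` satisfies `α^d ∈ ρ` and no element of `ρ` has the
form `α^{d-1}β` or `βα^{d-1}` with `β` an arrow distinct from `α`; (2) for every closed
trail `T` with `ℓ(T) > 1` and `ρ_T ⊆ ρ`, no element of `ρ∖ρ_T` begins or ends with an
arrow of `T`. -/
def CondC1 (d : ℕ) (ρ : PathSet V) : Prop :=
  (∀ (v : V) (α : v ⟶ v), CondLoop d ρ α) ∧
  (∀ ⦃a : V⦄ (T : Quiver.Path a a), IsClosedTrail T → 1 < T.length → RhoTSub d ρ T →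
    ∀ ⦃x y : V⦄ (q : Quiver.Path x y), ρ q → ¬(q.length = d ∧ LiesOn q T) →
      (∀ ⦃w : V⦄ (e : x ⟶ w) (q' : Quiver.Path w y),
          q = (Quiver.Hom.toPath e).comp q' → (⟨x, w, e⟩ : SArrow V) ∉ arrowList T) ∧
      (∀ ⦃w : V⦄ (e : w ⟶ y) (q' : Quiver.Path x w),
          q = q'.comp (Quiver.Hom.toPath e) → (⟨w, y, e⟩ : SArrow V) ∉ arrowList T))

/-- Condition (C2): (1) for every `A`-loop `c`, some rotation `c'` of `c` satisfies
`c'^d ∈ ρ` and no element of `ρ` has the form `c'^{d-1}β` or `βc'^{d-1}` with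
`β` a path of length `A` distinct from `c'`; (2) for every closed `A`-trail `T` with at
least two segments and `ρ_T ⊆ ρ`, no element of `ρ∖ρ_T` begins or ends with an
`A`-segment of `T`. -/
def CondC2 (D A d : ℕ) (ρ : PathSet V) : Prop :=
  (∀ ⦃v : V⦄ (c : Quiver.Path v v), c.length = A →
    ∃ (w : V) (p : Quiver.Path v w) (q : Quiver.Path w v), c = p.comp q ∧ p.length < A ∧
      ρ (cpow (q.comp p) d) ∧
      (∀ ⦃x : V⦄ (β : Quiver.Path w x), β.length = A →
          (⟨w, x, β⟩ : SPath V) ≠ ⟨w, w, q.comp p⟩ →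
          ¬ ρ ((cpow (q.comp p) (d - 1)).comp β)) ∧
      (∀ ⦃x : V⦄ (β : Quiver.Path x w), β.length = A →
          (⟨x, w, β⟩ : SPath V) ≠ ⟨w, w, q.comp p⟩ →
          ¬ ρ (β.comp (cpow (q.comp p) (d - 1))))) ∧
  (∀ ⦃a : V⦄ (T : Quiver.Path a a) (L : List (SPath V)),
      SegChain A L a a T → L.Nodup → 2 ≤ L.length → ARhoTSub D A ρ T →
      ∀ ⦃x y : V⦄ (q : Quiver.Path x y), ρ q → ¬(q.length = D ∧ ALiesOn A q T) →
        (∀ ⦃w : V⦄ (α : Quiver.Path x w) (q' : Quiver.Path w y),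
            q = α.comp q' → (⟨x, w, α⟩ : SPath V) ∉ L) ∧
        (∀ ⦃w : V⦄ (α : Quiver.Path w y) (q' : Quiver.Path x w),
            q = q'.comp α → (⟨w, y, α⟩ : SPath V) ∉ L))

/-! Induction on `n`. An element of `R^{n+1}` has the form `R''pu` with `R''p ∈ R^n` and
`R'' ∈ R^{n-1}`; the length formula `δ` forces `ℓ(p) + ℓ(u) = d`, so the element of `ρ`
overlapping `p` is `pu` itself. A subpath of length `d` of `R''pu` either lies in `R''p`,
where induction applies, or ends inside `u`; it then lies in `a₀pu`, with `a₀` the suffix of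
`R''` of length `ℓ(u)`. Since `a₀p ∈ ρ` by induction and `pu ∈ ρ`, the `d`-covering property
puts it in `ρ`. -/

namespace Quiver.Path

theorem exists_eq_comp_of_le_length_right {a b : V} (p : Path a b) {k : ℕ}
    (hk : k ≤ p.length) :
    ∃ (c : V) (p₁ : Path a c) (p₂ : Path c b), p = p₁.comp p₂ ∧ p₂.length = k := by
  obtain ⟨c, p₁, p₂, rfl, h₁⟩ := p.exists_eq_comp_of_le_length (Nat.sub_le p.length k)
  refine ⟨c, p₁, p₂, rfl, ?_⟩
  rw [length_comp] at h₁ hk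
  omega

theorem exists_eq_comp_of_comp_eq_comp {a : V} :
    ∀ {c b₁ b₂ : V} {p₁ : Path a b₁} {q₁ : Path b₁ c} {p₂ : Path a b₂} {q₂ : Path b₂ c},
      p₁.comp q₁ = p₂.comp q₂ → q₁.length ≤ q₂.length →
      ∃ w : Path b₂ b₁, p₁ = p₂.comp w ∧ q₂ = w.comp q₁
  | _, _, _, _, nil, _, q₂, h, _ => ⟨q₂, by simpa using h, by simp⟩
  | _, _, _, _, cons _ _, _, nil, _, hlen => by simp at hlen
  | _, _, _, p₁, cons q₁ e, p₂, cons q₂ e', h, hlen => by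
    rw [comp_cons, comp_cons] at h
    obtain rfl := obj_eq_of_cons_eq_cons h
    obtain rfl : e = e' := eq_of_heq (hom_heq_of_cons_eq_cons h)
    obtain ⟨w, rfl, rfl⟩ :=
      exists_eq_comp_of_comp_eq_comp (eq_of_heq (heq_of_cons_eq_cons h))
        (Nat.le_of_succ_le_succ hlen)
    exact ⟨w, rfl, by rw [comp_cons]⟩

end Quiver.Path

open Quiver.Path

theorem comp_mem_iff_of_length_eq_zero (P : PathSet V) {a x y : V} {U : Path a x}
    (hU : U.length = 0) {s : Path x y} : P (U.comp s) ↔ P s := by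
  cases U with
  | nil => rw [nil_comp]
  | cons _ _ => simp at hU

theorem comp_mem_iff_of_length_eq_zero_right (P : PathSet V) {x y b : V} {W : Path y b}
    (hW : W.length = 0) {s : Path x y} : P (s.comp W) ↔ P s := by
  cases W with
  | nil => rw [comp_nil]
  | cons _ _ => simp at hW

theorem mem_of_isSubpathP_of_length_eq (P : PathSet V) {a b x y : V} {R : Path a b}
    {s : Path x y} (hR : P R) (hs : IsSubpathP s R) (hlen : s.length = R.length) : P s := by
  obtain ⟨U, W, rfl⟩ := hs
  simp only [length_comp] at hlen
  rwa [comp_mem_iff_of_length_eq_zero_right P (by omega),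
    comp_mem_iff_of_length_eq_zero P (by omega)] at hR

theorem IsSubpathP.of_comp_comp {x y a b c e : V} {s : Path x y} {P : Path a b}
    {Y : Path b c} {u : Path c e} (hs : s.length ≤ Y.length)
    (h : IsSubpathP s ((P.comp Y).comp u)) :
    IsSubpathP s (P.comp Y) ∨ IsSubpathP s (Y.comp u) := by
  obtain ⟨U, W, hUW⟩ := h
  by_cases hW : u.length ≤ W.length
  · obtain ⟨w, hw, -⟩ := exists_eq_comp_of_comp_eq_comp hUW hW
    exact .inl ⟨U, w, hw⟩
  · rw [comp_assoc, comp_assoc] at hUW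
    obtain ⟨w, -, hw⟩ := exists_eq_comp_of_comp_eq_comp hUW.symm
      (by simp only [length_comp]; omega)
    exact .inr ⟨w, W, by rw [hw, comp_assoc]⟩

theorem deltaF_add_two (d m : ℕ) : deltaF d (m + 2) = deltaF d m + d := by
  unfold deltaF
  rw [Nat.add_mod_right]
  split_ifs
  · rw [show (m + 2) / 2 = m / 2 + 1 by omega, Nat.add_mul, one_mul]
  · rw [show (m + 2 - 1) / 2 = (m - 1) / 2 + 1 by omega, Nat.add_mul, one_mul]
    omega

section LengthFormula

variable {d : ℕ} {ρ : PathSet V}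

theorem length_eq_deltaF_of_rSet
    (hRlen : ∀ m, 2 ≤ m → ∀ ⦃a b : V⦄ (p : Path a b), RSet ρ m p → p.length = deltaF d m)
    {m : ℕ} (hm : 1 ≤ m) {a b : V} {p : Path a b} (hp : RSet ρ m p) :
    p.length = deltaF d m := by
  obtain rfl | hm := hm.eq_or_lt
  · simpa [deltaF, RSet] using hp
  · exact hRlen m hm p hp

theorem exists_eq_comp_comp_of_rSet
    (hρlen : ∀ ⦃a b : V⦄ (p : Path a b), ρ p → p.length = d)
    (hRlen : ∀ m, 2 ≤ m → ∀ ⦃a b : V⦄ (p : Path a b), RSet ρ m p → p.length = deltaF d m)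
    {k : ℕ} {a e : V} {R : Path a e} (hR : RSet ρ (k + 3) R) :
    ∃ (b c : V) (R'' : Path a b) (p : Path b c) (u : Path c e),
      R = (R''.comp p).comp u ∧ RSet ρ (k + 2) (R''.comp p) ∧ ρ (p.comp u) ∧
        1 ≤ p.length ∧ u.length ≤ R''.length := by
  have hlen := hRlen (k + 3) (by omega) R hR
  obtain ⟨c, R', u, hR', rfl, b, R'', p, hR'', rfl, ⟨_, q, hq, v, hpu, hu, huq⟩, -⟩ := hR
  have hlen' := hRlen (k + 2) (by omega) _ hR'
  have hlen'' := length_eq_deltaF_of_rSet hRlen (by omega) hR''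
  have hlen_q := hρlen q hq
  have hlen_v := congrArg length hpu
  have hδ₂ : deltaF d (k + 2) = deltaF d k + d := deltaF_add_two d k
  have hδ₃ : deltaF d (k + 3) = deltaF d (k + 1) + d := deltaF_add_two d (k + 1)
  simp only [length_comp] at hlen hlen' hlen_v
  -- `ℓ(p) + ℓ(u) = δ(k+3) - δ(k+1) = d = ℓ(q)`, so `v` is trivial and `pu = q`.
  refine ⟨b, c, R'', p, u, rfl, hR', ?_, by omega, by omega⟩
  rwa [hpu, comp_mem_iff_of_length_eq_zero ρ (by omega)]

end LengthFormula

/-- for a `d`-covering set `ρ` of paths of length `d` such that every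
element of `R^m` has length `δ(m)` for `m ≥ 2`, every subpath of length `d` of an
element of `R^n` (`n ≥ 2`) belongs to `ρ`. -/
theorem stmt_0 {V : Type u} [Quiver.{v + 1} V] [Fintype V] [∀ a b : V, Fintype (a ⟶ b)]
    (d : ℕ) (hd : 2 ≤ d) (ρ : PathSet V)
    (hρlen : ∀ ⦃a b : V⦄ (p : Quiver.Path a b), ρ p → p.length = d)
    (hcov : DCovering d ρ)
    (hRlen : ∀ m, 2 ≤ m → ∀ ⦃a b : V⦄ (p : Quiver.Path a b), RSet ρ m p →
      p.length = deltaF d m) :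
    ∀ n, 2 ≤ n → ∀ ⦃a b : V⦄ (R : Quiver.Path a b), RSet ρ n R →
      ∀ ⦃x y : V⦄ (s : Quiver.Path x y), s.length = d → IsSubpathP s R → ρ s := by
  intro n hn
  induction n, hn using Nat.le_induction with
  | base =>
    intro a b R hR x y s hs hsub
    exact mem_of_isSubpathP_of_length_eq ρ hR hsub (by rw [hs, hρlen R hR])
  | succ n hn ih =>
    intro a b R hR x y s hs hsub
    obtain ⟨k, rfl⟩ : ∃ k, n = k + 2 := ⟨n - 2, by omega⟩
    obtain ⟨_, _, R'', p, u, rfl, hR', hpu, hp, hu⟩ :=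
      exists_eq_comp_comp_of_rSet hρlen hRlen hR
    obtain ⟨_, P, a₀, rfl, ha₀⟩ := R''.exists_eq_comp_of_le_length_right hu
    rw [comp_assoc P a₀ p] at hR' hsub
    have ha₀p : ρ (a₀.comp p) :=
      ih _ hR' _ (by rw [length_comp, ha₀, add_comm, ← length_comp, hρlen _ hpu])
        ⟨P, .nil, rfl⟩
    rcases hsub.of_comp_comp (by rw [hs, hρlen _ ha₀p]) with hsub | hsub
    · exact ih _ hR' s hs hsub
    · exact hcov a₀ p u ha₀p hpu hp s hs hsub
end

section
/- Let Q be a finite quiver, let d ≥ 2, and let ρ be a d-covering set of paths of Q, each of length d. Let T = α_1⋯α_n be a closed trail in Q with d ≥ n+1, and suppose that some element of ρ lies on T (as is automatic when the monomial algebra KQ/(ρ) is finite dimensional). Then every path of length d that lies on the closed trail T belongs to ρ. -/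
open Quiver

universe u v

variable {V : Type u} [Quiver.{v + 1} V]

/-!
A path lying on the closed path `T` is determined by its length and by the residue modulo
`n = ℓ(T)` of its starting position in a power of `T`. Take `q₀ ∈ ρ` lying on `T` and write
`q₀ = p·mid` with `ℓ(p) = n`; since `d > n`, `mid` is non-trivial. Continuing `q₀` by the next
`n` arrows `w` of `T` gives `mid·w`, which is `q₀` moved by one period, hence `mid·w = q₀ ∈ ρ`.
As `ρ` is `d`-covering, every length-`d` subpath of `p·mid·w` lies in `ρ`; these start at
`n + 1` consecutive positions, so they cover every residue and hence every path of `ρ_T`.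
-/

namespace Quiver.Path

theorem arrowList_comp {a b c : V} (p : Path a b) (q : Path b c) :
    arrowList (p.comp q) = arrowList p ++ arrowList q := by
  induction q with
  | nil => simp [arrowList]
  | cons q e ih => simp [arrowList, ih]

theorem length_arrowList {a b : V} (p : Path a b) : (arrowList p).length = p.length := by
  induction p with
  | nil => rfl
  | cons p e ih => simp [arrowList, ih]

theorem length_cpow {a : V} (T : Path a a) (m : ℕ) : (cpow T m).length = m * T.length := by
  induction m with
  | zero => simp [cpow]
  | succ m ih => simp [cpow, ih, Nat.succ_mul]

theorem source_eq_of_arrowList_eq {a b c e : V} {p : Path a b} {q : Path c e}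
    (h : arrowList p = arrowList q) (hp : p.length ≠ 0) : a = c := by
  have hq : q.length ≠ 0 := by rwa [← length_arrowList, ← h, length_arrowList]
  obtain ⟨_, f, p', rfl, -⟩ := (length_ne_zero_iff_eq_comp p).1 hp
  obtain ⟨_, g, q', rfl, -⟩ := (length_ne_zero_iff_eq_comp q).1 hq
  simp only [arrowList_comp, Hom.toPath, arrowList, List.nil_append, List.cons_append,
    List.cons.injEq] at h
  exact congrArg Sigma.fst h.1

theorem sigma_eq_of_arrowList_eq {a : V} :
    ∀ {b c : V} {p : Path a b} {q : Path a c}, arrowList p = arrowList q →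
      (⟨b, p⟩ : Σ b, Path a b) = ⟨c, q⟩
  | _, _, .nil, .nil, _ => rfl
  | _, _, .nil, .cons _ _, h => by simp [arrowList] at h
  | _, _, .cons _ _, .nil, h => by simp [arrowList] at h
  | _, _, .cons p f, .cons q g, h => by
    obtain ⟨hpq, hfg⟩ := List.append_inj' h rfl
    obtain ⟨⟩ := sigma_eq_of_arrowList_eq hpq
    simp only [List.cons.injEq, and_true] at hfg
    obtain ⟨⟩ := hfg
    rfl

theorem getElem?_arrowList_of_eq_comp {a b c e : V} {W : Path a e} {u : Path a b}
    {q : Path b c} {v : Path c e} (h : W = (u.comp q).comp v) {j : ℕ} (hj : j < q.length) :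
    (arrowList q)[j]? = (arrowList W)[u.length + j]? := by
  rw [h, arrowList_comp, arrowList_comp, List.append_assoc, List.getElem?_append_right
    (by rw [length_arrowList]; omega), length_arrowList, Nat.add_sub_cancel_left,
    List.getElem?_append_left (by rwa [length_arrowList])]

theorem getElem?_arrowList_cpow {a : V} (T : Path a a) {m j : ℕ} (hj : j < m * T.length) :
    (arrowList (cpow T m))[j]? = (arrowList T)[j % T.length]? := by
  induction m with
  | zero => simp at hj
  | succ m ih =>
    rw [cpow, arrowList_comp]
    by_cases hjm : j < m * T.length
    · rw [List.getElem?_append_left (by rwa [length_arrowList, length_cpow]), ih hjm]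
    · rw [List.getElem?_append_right (by rw [length_arrowList, length_cpow]; omega),
        length_arrowList, length_cpow, Nat.mod_eq_sub_mul_div,
        Nat.div_eq_of_lt_le (k := m) (by omega) hj, Nat.mul_comm]

theorem arrowList_eq_of_eq_comp_cpow {a b c b' c' : V} {T : Path a a} {m m' : ℕ}
    {u : Path a b} {q : Path b c} {v : Path c a} {u' : Path a b'} {q' : Path b' c'}
    {v' : Path c' a} (h : cpow T m = (u.comp q).comp v) (h' : cpow T m' = (u'.comp q').comp v')
    (hlen : q.length = q'.length) (hmod : u.length % T.length = u'.length % T.length) :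
    arrowList q = arrowList q' := by
  have hW := congrArg length h
  have hW' := congrArg length h'
  simp only [length_cpow, length_comp] at hW hW'
  refine List.ext_getElem? fun j => ?_
  by_cases hj : j < q.length
  · rw [getElem?_arrowList_of_eq_comp h hj, getElem?_arrowList_of_eq_comp h' (hlen ▸ hj),
      getElem?_arrowList_cpow T (by omega), getElem?_arrowList_cpow T (by omega),
      Nat.add_mod, hmod, ← Nat.add_mod]
  · rw [List.getElem?_eq_none (by rw [length_arrowList]; omega),
      List.getElem?_eq_none (by rw [length_arrowList]; omega)]

end Quiver.Path

theorem PathSet.of_arrowList_eq (P : PathSet V) {a b c e : V} {p : Path a b} {q : Path c e}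
    (hp : P p) (h : arrowList p = arrowList q) (hne : p.length ≠ 0) : P q := by
  obtain rfl := Path.source_eq_of_arrowList_eq h hne
  obtain ⟨⟩ := Path.sigma_eq_of_arrowList_eq h
  exact hp

theorem PathSet.of_eq_comp_cpow (P : PathSet V) {a b c b' c' : V} {T : Path a a} {m m' : ℕ}
    {u : Path a b} {q : Path b c} {v : Path c a} {u' : Path a b'} {q' : Path b' c'}
    {v' : Path c' a} (hq : P q) (hne : q.length ≠ 0) (h : cpow T m = (u.comp q).comp v)
    (h' : cpow T m' = (u'.comp q').comp v') (hlen : q.length = q'.length)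
    (hmod : u.length % T.length = u'.length % T.length) : P q' :=
  P.of_arrowList_eq hq (Path.arrowList_eq_of_eq_comp_cpow h h' hlen hmod) hne

theorem Nat.exists_lt_add_mod_eq {n : ℕ} (hn : 0 < n) (i j : ℕ) :
    ∃ k < n, (i + k) % n = j % n := by
  refine ⟨(j + (n - i % n)) % n, Nat.mod_lt _ hn, ?_⟩
  have hi : i + (j + (n - i % n)) = j + n * (i / n + 1) := by
    have := Nat.mod_add_div i n
    have := Nat.mod_lt i hn
    rw [Nat.mul_succ]
    omega
  rw [Nat.add_mod_mod, hi, Nat.add_mul_mod_self_left]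

theorem DCovering.exists_extension_subpaths_mem {d : ℕ} {ρ : PathSet V}
    (hcov : DCovering d ρ) {a b c : V} {T : Path a a} (hdT : T.length < d) {m : ℕ}
    {u : Path a b} {q₀ : Path b c} {v : Path c a} (hq₀d : q₀.length = d) (hq₀ : ρ q₀)
    (h : cpow T m = (u.comp q₀).comp v) :
    ∃ (e : V) (W : Path b e) (v' : Path e a), cpow T (m + 1) = (u.comp W).comp v' ∧
      W.length = d + T.length ∧
      ∀ ⦃x y : V⦄ (s : Path x y), s.length = d → IsSubpathP s W → ρ s := by
  obtain ⟨_, p, mid, rfl, hp⟩ := q₀.exists_eq_comp_of_le_length (n := T.length) (hq₀d ▸ hdT.le)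
  obtain ⟨_, w, v', hvT, hw⟩ := (v.comp T).exists_eq_comp_of_le_length (n := T.length) (by simp)
  rw [Path.length_comp] at hq₀d
  have hT : cpow T (m + 1) = ((u.comp p).comp (mid.comp w)).comp v' := by
    rw [cpow, h]
    simp only [Path.comp_assoc, hvT]
  have hmidw : ρ (mid.comp w) :=
    ρ.of_eq_comp_cpow hq₀ (by rw [Path.length_comp]; omega) h hT
      (by simp only [Path.length_comp]; omega) (by simp [hp])
  refine ⟨_, (p.comp mid).comp w, v', ?_, by simp only [Path.length_comp]; omega,
    hcov p mid w hq₀ hmidw (by omega)⟩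
  rw [hT]
  simp only [Path.comp_assoc]

/-- if `T` is a closed trail, `d ≥ ℓ(T) + 1`, and some element of `ρ`
lies on `T`, then every path of length `d` lying on `T` belongs to `ρ`. -/
theorem stmt_1 {V : Type u} [Quiver.{v + 1} V] [Fintype V] [∀ a b : V, Fintype (a ⟶ b)]
    (d : ℕ) (hd : 2 ≤ d) (ρ : PathSet V)
    (hρlen : ∀ ⦃a b : V⦄ (p : Quiver.Path a b), ρ p → p.length = d)
    (hcov : DCovering d ρ)
    {a : V} (T : Quiver.Path a a) (hT : IsClosedTrail T)
    (hdT : T.length + 1 ≤ d)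
    (hex : ∃ (x y : V) (q : Quiver.Path x y), ρ q ∧ LiesOn q T) :
    RhoTSub d ρ T := by
  obtain ⟨_, _, q₀, hq₀, m, -, u, v, hq₀T⟩ := hex
  have hq₀d : q₀.length = d := hρlen q₀ hq₀
  obtain ⟨_, W, v', hWT, hW, hWρ⟩ := hcov.exists_extension_subpaths_mem (by omega) hq₀d hq₀ hq₀T
  rintro x y q hqd ⟨m', -, u', v'', hqT⟩
  obtain ⟨k, hk, hkmod⟩ := Nat.exists_lt_add_mod_eq hT.1 u.length u'.length
  obtain ⟨_, u₁, rest, rfl, hu₁⟩ := W.exists_eq_comp_of_le_length (n := k) (by omega)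
  obtain ⟨_, s, v₁, rfl, hs⟩ := rest.exists_eq_comp_of_le_length (n := d)
    (by simp only [Path.length_comp] at hW; omega)
  have hsT : cpow T (m + 1) = ((u.comp u₁).comp s).comp (v₁.comp v') := by
    rw [hWT]
    simp only [Path.comp_assoc]
  have hsρ : ρ s := hWρ s hs ⟨u₁, v₁, (Path.comp_assoc u₁ s v₁).symm⟩
  exact ρ.of_eq_comp_cpow hsρ (by omega) hsT hqT (by omega)
    (by rwa [Path.length_comp, hu₁])
end

section
/- Let Q be a finite quiver, let d ≥ 2, and let ρ be a d-covering set of paths of Q, each of length d, such that every closed trail of Q has some element of ρ lying on it (as is automatic when the monomial algebra KQ/(ρ) is finite dimensional). Let T = α_1⋯α_n be a closed trail with n ≥ 2 and ρ_T ⊆ ρ, such that (i) no α_i is a loop and (ii) no subcycle q of T of length at least 2 satisfies ρ_q ⊆ ρ. If p is a path of length d all of whose arrows belong to {α_1,…,α_n} and p does not lie on T, then p ∉ ρ. -/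
open Quiver

universe u v

variable {V : Type u} [Quiver.{v + 1} V]

/-!
Read a path as the word of its arrows and `T` as the periodic word `α₁ ⋯ αₙ α₁ ⋯`.
A path `p` whose arrows are arrows of `T` but which does not lie on `T` has the form `p' β r`,
where `p'` runs along `T` up to some `αᵢ` and the arrow `β = αⱼ` is not `αᵢ₊₁`.
Since `t(αᵢ) = s(αⱼ)`, the segment `C = αⱼ ⋯ αᵢ` of `T` is a subcycle, of length less than `n`,
and at least `2` because `T` has no loops.

Suppose `p ∈ ρ`. Let `L` be a segment of `T` ending just before `αⱼ` and `R` one starting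
just after `αᵢ`, both of length at least `d`. Every factor of length `d` of `L Cᵐ R` lies in
`ρ`: for `m = 1` because `ρ_T ⊆ ρ`; for `m = 2` by the covering property, applied first to `p`
and the segment of `T` of length `d` ending with `p'`, then to the resulting factor ending with
`αᵢ αⱼ` and the segment of `T` starting with `αⱼ`; for `m ≥ 3` by the covering property applied
to the factors of length `d` ending with the first `m - 1` copies of `C` and starting with the
last `m - 1` copies. Hence `ρ_C ⊆ ρ`, which (ii) forbids.
-/

section Words

variable {α : Type*}

def FactorsIn (d : ℕ) (R : Set (List α)) (X : List α) : Prop :=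
  ∀ w, w <:+: X → w.length = d → w ∈ R

def WordCovering (d : ℕ) (R : Set (List α)) : Prop :=
  ∀ P Q D : List α, P ++ Q ∈ R → Q ++ D ∈ R → Q ≠ [] → FactorsIn d R (P ++ Q ++ D)

variable {d : ℕ} {R : Set (List α)}

theorem FactorsIn.mono {X Y : List α} (h : FactorsIn d R Y) (hXY : X <:+: Y) :
    FactorsIn d R X :=
  fun w hw hlen => h w (hw.trans hXY) hlen

theorem factorsIn_of_mem {w : List α} (hw : w ∈ R) (hlen : w.length = d) : FactorsIn d R w :=
  fun _ hw' hlen' => hw'.eq_of_length (hlen'.trans hlen.symm) ▸ hw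

theorem List.IsSuffix.append_append_infix {a a' : List α} (ha : a <:+ a') (B : List α)
    {e e' : List α} (he : e <+: e') : a ++ B ++ e <:+: a' ++ B ++ e' := by
  obtain ⟨u, rfl⟩ := ha
  obtain ⟨v, rfl⟩ := he
  exact ⟨u, v, by simp⟩

theorem WordCovering.factorsIn_append_append (hcov : WordCovering d R) {A B D : List α}
    (hAB : FactorsIn d R (A ++ B)) (hBD : FactorsIn d R (B ++ D)) (hB : B ≠ [])
    (hA : d ≤ A.length + B.length) (hD : d ≤ B.length + D.length) :
    FactorsIn d R (A ++ B ++ D) := by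
  intro w hw hlen
  rw [List.append_assoc, List.infix_append_iff] at hw
  rcases hw with hw | hw | ⟨a, b, rfl, ha, hb⟩
  · exact hAB w (hw.trans (List.infix_append [] A B)) hlen
  · exact hBD w hw hlen
  rcases le_or_gt b.length B.length with hbB | hBb
  · have hb' : b <+: B := List.prefix_of_prefix_length_le hb (List.prefix_append B D) hbB
    exact hAB _ (List.infix_append_iff.mpr (Or.inr (Or.inr ⟨a, b, rfl, ha, hb'⟩))) hlen
  -- the factor contains `B`, so it sits between the factors of length `d` that end with `B`
  -- and that start with `B`
  obtain ⟨e, rfl⟩ : B <+: b :=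
    List.prefix_of_prefix_length_le (List.prefix_append B D) hb hBb.le
  have he : e <+: D := (List.prefix_append_right_inj B).mp hb
  simp only [List.length_append] at hlen
  have hleft : A.drop (A.length + B.length - d) ++ B ∈ R :=
    hAB _ ⟨A.take (A.length + B.length - d), [], by simp [← List.append_assoc]⟩
      (by simp; omega)
  have hright : B ++ D.take (d - B.length) ∈ R :=
    hBD _ ((List.prefix_append_right_inj B).mpr (List.take_prefix _ D)).isInfix (by simp; omega)
  refine hcov _ _ _ hleft hright hB _ ?_ (by simp; omega)
  rw [← List.append_assoc]
  have ha' : a <:+ A.drop (A.length + B.length - d) :=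
    List.suffix_of_suffix_length_le ha (List.drop_suffix _ A) (by simp; omega)
  have he' : e <+: D.take (d - B.length) :=
    List.prefix_of_prefix_length_le he (List.take_prefix _ D) (by simp; omega)
  exact ha'.append_append_infix B he'

theorem List.flatten_replicate_succ' (n : ℕ) (l : List α) :
    (List.replicate (n + 1) l).flatten = (List.replicate n l).flatten ++ l := by
  rw [List.replicate_succ', List.flatten_append, List.flatten_singleton]

theorem WordCovering.factorsIn_append_pow_append (hcov : WordCovering d R)
    {c : α} {C Lw Rw pfx rest : List α} (hX : FactorsIn d R (Lw ++ c :: C ++ Rw))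
    (hLw : d ≤ Lw.length) (hRw : d ≤ Rw.length) (hpfx : pfx ≠ [])
    (hsuf : pfx <:+ Lw ++ c :: C) (hp : pfx ++ c :: rest ∈ R)
    (hlen : (pfx ++ c :: rest).length = d) :
    ∀ m, 1 ≤ m → FactorsIn d R (Lw ++ (List.replicate m (c :: C)).flatten ++ Rw) := by
  obtain ⟨Z, hZ⟩ := hsuf
  have hlen' : Lw.length + (C.length + 1) = Z.length + pfx.length := by
    simpa using congrArg List.length hZ.symm
  have hjump : FactorsIn d R (Lw ++ c :: C ++ [c]) := by
    have h := hcov.factorsIn_append_append (A := Z) (B := pfx) (D := c :: rest)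
      (hX.mono (by rw [hZ]; exact List.infix_append [] _ _)) (factorsIn_of_mem hp hlen) hpfx
      (by omega) (by simp at hlen ⊢; omega)
    exact h.mono ⟨[], rest, by simp [← hZ]⟩
  have hC2 : FactorsIn d R (Lw ++ c :: C ++ c :: C ++ Rw) := by
    have h := hcov.factorsIn_append_append (A := Lw ++ c :: C) (B := [c]) (D := C ++ Rw) hjump
      (hX.mono ⟨Lw, [], by simp⟩) (by simp) (by simp; omega) (by simp; omega)
    simpa using h
  have hCpow : ∀ n, FactorsIn d R (Lw ++ (List.replicate (n + 2) (c :: C)).flatten ++ Rw) := by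
    intro n
    induction n with
    | zero => simpa using hC2
    | succ n ih =>
      have h := hcov.factorsIn_append_append (A := Lw ++ c :: C)
        (B := (List.replicate (n + 1) (c :: C)).flatten) (D := c :: C ++ Rw)
        (ih.mono ⟨[], Rw, by simp [List.replicate_succ]⟩)
        (ih.mono ⟨Lw, [], by simp [List.flatten_replicate_succ' (n + 1)]⟩)
        (by simp [List.replicate_succ]) (by simp; omega) (by simp; omega)
      have e : (List.replicate (n + 1 + 2) (c :: C)).flatten =
          c :: C ++ (List.replicate (n + 1) (c :: C)).flatten ++ c :: C := by
        rw [List.flatten_replicate_succ', List.replicate_succ, List.flatten_cons]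
      rw [e]
      simpa only [List.append_assoc] using h
  intro m hm
  obtain rfl | ⟨n, rfl⟩ : m = 1 ∨ ∃ n, m = n + 2 := by
    rcases m with _ | _ | n <;> simp_all
  · simpa using hX
  · exact hCpow n

end Words

section Windows

variable {α : Type*}

def window (f : ℕ → α) (s n : ℕ) : List α :=
  List.ofFn fun i : Fin n => f (s + i)

@[simp] theorem length_window (f : ℕ → α) (s n : ℕ) : (window f s n).length = n := by
  simp [window]

@[simp] theorem getElem_window (f : ℕ → α) (s n i : ℕ) (h : i < (window f s n).length) :
    (window f s n)[i] = f (s + i) := by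
  simp [window]

theorem window_add (f : ℕ → α) (s m n : ℕ) :
    window f s (m + n) = window f s m ++ window f (s + m) n := by
  refine List.ext_getElem (by simp) fun i _ _ => ?_
  simp only [List.getElem_append, length_window, getElem_window]
  split_ifs
  · rfl
  · congr 1
    omega

theorem window_succ' (f : ℕ → α) (s n : ℕ) :
    window f s (n + 1) = window f s n ++ [f (s + n)] := by
  rw [window_add]
  simp [window]

theorem window_succ (f : ℕ → α) (s n : ℕ) :
    window f s (n + 1) = f s :: window f (s + 1) n := by
  rw [Nat.add_comm, window_add]
  simp [window]

theorem exists_eq_window_of_infix {f : ℕ → α} {s n : ℕ} {w : List α}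
    (h : w <:+: window f s n) : ∃ t, w = window f t w.length := by
  obtain ⟨u, v, huv⟩ := h
  refine ⟨s + u.length, List.ext_getElem (by simp) fun i h₁ _ => ?_⟩
  have key := congrArg (·[u.length + i]?) huv
  simp only [List.append_assoc, List.getElem?_append_right (Nat.le_add_right _ _),
    Nat.add_sub_cancel_left, List.getElem?_append_left h₁] at key
  rw [List.getElem?_eq_getElem h₁] at key
  rw [getElem_window, Nat.add_assoc]
  have hlt : u.length + i < (window f s n).length := by
    rw [← huv]; simp; omega
  rw [List.getElem?_eq_getElem hlt, getElem_window] at key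
  exact Option.some.inj key

theorem eq_window_or_exists_jump (f : ℕ → α) :
    ∀ w : List α, w ≠ [] → (∀ x ∈ w, x ∈ Set.range f) →
      (∃ s, w = window f s w.length) ∨
        ∃ s k x rest, 1 ≤ k ∧ w = window f s k ++ x :: rest ∧ x ≠ f (s + k) := by
  intro w
  induction w using List.reverseRecOn with
  | nil => simp
  | append_singleton w y ih =>
    intro _ hrange
    obtain rfl | hw := eq_or_ne w []
    · obtain ⟨j, rfl⟩ := hrange y (by simp)
      exact Or.inl ⟨j, by simp [window]⟩
    rcases ih hw fun x hx => hrange x (by simp [hx]) with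
      ⟨s, hs⟩ | ⟨s, k, x, rest, hk, hs, hx⟩
    · by_cases hy : y = f (s + w.length)
      · refine Or.inl ⟨s, ?_⟩
        rw [List.length_append, List.length_singleton, window_succ', ← hs, hy]
      · exact Or.inr ⟨s, w.length, y, [], List.length_pos_iff.mpr hw, by rw [← hs], hy⟩
    · exact Or.inr ⟨s, k, x, rest ++ [y], hk, by simp [hs], hx⟩

end Windows

section CyclicStream

variable {α : Type*} {l : List α} (hl : l ≠ [])

def cyclicStream (l : List α) (hl : l ≠ []) (t : ℕ) : α :=
  l[t % l.length]'(Nat.mod_lt _ (List.length_pos_iff.mpr hl))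

theorem cyclicStream_mem (t : ℕ) : cyclicStream l hl t ∈ l :=
  List.getElem_mem _

theorem cyclicStream_add_mul (t c : ℕ) :
    cyclicStream l hl (t + l.length * c) = cyclicStream l hl t := by
  simp [cyclicStream, Nat.add_mul_mod_self_left]

theorem window_cyclicStream_add_mul (s c n : ℕ) :
    window (cyclicStream l hl) (s + l.length * c) n = window (cyclicStream l hl) s n := by
  refine List.ext_getElem (by simp) fun i _ _ => ?_
  simp only [getElem_window]
  rw [Nat.add_right_comm, cyclicStream_add_mul]

theorem flatten_replicate_eq_window (m : ℕ) :
    (List.replicate m l).flatten = window (cyclicStream l hl) 0 (m * l.length) := by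
  induction m with
  | zero => simp [window]
  | succ m ih =>
    have hl' : window (cyclicStream l hl) 0 l.length = l := by
      refine List.ext_getElem (by simp) fun i _ h => ?_
      simp [cyclicStream, Nat.mod_eq_of_lt h]
    rw [List.flatten_replicate_succ', ih, Nat.succ_mul, window_add]
    congr 1
    rw [Nat.mul_comm, window_cyclicStream_add_mul, hl']

theorem window_infix_flatten_replicate (s n : ℕ) :
    window (cyclicStream l hl) s n <:+: (List.replicate (s + n + 1) l).flatten := by
  have hN : s + n ≤ (s + n + 1) * l.length :=
    (Nat.le_succ _).trans (Nat.le_mul_of_pos_right _ (List.length_pos_iff.mpr hl))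
  rw [flatten_replicate_eq_window hl, ← Nat.add_sub_cancel' hN, window_add, window_add]
  exact ⟨_, _, by rw [Nat.zero_add]⟩

theorem exists_lt_cyclicStream_add_eq {x : α} (hx : x ∈ l) (t : ℕ) :
    ∃ r < l.length, cyclicStream l hl (t + r) = x := by
  obtain ⟨j, hj, rfl⟩ := List.getElem_of_mem hx
  have hpos := List.length_pos_iff.mpr hl
  refine ⟨(j + l.length * t - t) % l.length, Nat.mod_lt _ hpos, ?_⟩
  have ht : t ≤ l.length * t := Nat.le_mul_of_pos_left t hpos
  simp only [cyclicStream, Nat.add_mod_mod]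
  congr 1
  rw [show t + (j + l.length * t - t) = j + l.length * t by omega, Nat.add_mul_mod_self_left,
    Nat.mod_eq_of_lt hj]

theorem exists_subcycle_position {x : α} (hx : x ∈ l) {e : ℕ} (hxe : x ≠ cyclicStream l hl e)
    (B : ℕ) : ∃ j L c, B ≤ j ∧ 1 ≤ L ∧ L < l.length ∧ cyclicStream l hl j = x ∧
      j + L = e + l.length * c := by
  obtain ⟨r, hr, hrx⟩ := exists_lt_cyclicStream_add_eq hl hx (e + l.length * B)
  have hr0 : r ≠ 0 := by
    rintro rfl
    exact hxe (by rw [← hrx, Nat.add_zero, cyclicStream_add_mul])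
  have hB : B ≤ l.length * B := Nat.le_mul_of_pos_left B (List.length_pos_iff.mpr hl)
  refine ⟨e + l.length * B + r, l.length - r, B + 1, by omega, by omega, by omega, hrx, ?_⟩
  rw [Nat.mul_succ]
  omega

end CyclicStream

section ArrowList

@[simp] theorem arrowList_nil (a : V) : arrowList (Path.nil : Path a a) = [] := rfl

@[simp] theorem arrowList_cons {a b c : V} (p : Path a b) (e : b ⟶ c) :
    arrowList (p.cons e) = arrowList p ++ [⟨b, c, e⟩] := rfl

@[simp] theorem arrowList_comp {a b : V} (p : Path a b) :
    ∀ {c : V} (q : Path b c), arrowList (p.comp q) = arrowList p ++ arrowList q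
  | _, .nil => by simp
  | _, .cons q e => by simp [arrowList_comp p q]

@[simp] theorem length_arrowList {a : V} :
    ∀ {b : V} (p : Path a b), (arrowList p).length = p.length
  | _, .nil => rfl
  | _, .cons p e => by simp [length_arrowList p]

theorem arrowList_cpow {a : V} (T : Path a a) (m : ℕ) :
    arrowList (cpow T m) = (List.replicate m (arrowList T)).flatten := by
  induction m with
  | zero => rfl
  | succ m ih => rw [cpow, arrowList_comp, ih, List.flatten_replicate_succ']

theorem eq_fst_of_arrowList_eq_cons {a : V} :
    ∀ {b : V} {p : Path a b} {e : SArrow V} {l : List (SArrow V)},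
      arrowList p = e :: l → a = e.1
  | _, .nil, _, _, h => by simp at h
  | _, .cons p f, e, l, h => by
    rcases hp : arrowList p with _ | ⟨e', l'⟩
    · rw [arrowList_cons, hp] at h
      obtain ⟨rfl, -⟩ := List.cons_eq_cons.mp h
      exact Path.eq_of_length_zero p (by simpa using congrArg List.length hp)
    · rw [eq_fst_of_arrowList_eq_cons hp]
      rw [arrowList_cons, hp] at h
      exact congrArg (·.1) (List.cons_eq_cons.mp h).1

theorem eq_snd_of_arrowList_eq_concat {a b : V} {p : Path a b} {e : SArrow V}
    {l : List (SArrow V)} (h : arrowList p = l ++ [e]) : b = e.2.1 := by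
  cases p with
  | nil => simp at h
  | cons p f =>
    rw [arrowList_cons] at h
    rw [← List.singleton_inj.mp (List.append_inj' h rfl).2]

theorem exists_eq_comp_of_arrowList_eq_append {a : V} :
    ∀ {b : V} (p : Path a b) (l₁ l₂ : List (SArrow V)), arrowList p = l₁ ++ l₂ →
      ∃ (c : V) (p₁ : Path a c) (p₂ : Path c b),
        p = p₁.comp p₂ ∧ arrowList p₁ = l₁ ∧ arrowList p₂ = l₂
  | _, .nil, l₁, l₂, h => by
    obtain ⟨rfl, rfl⟩ := List.append_eq_nil_iff.mp h.symm
    exact ⟨a, .nil, .nil, rfl, rfl, rfl⟩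
  | _, .cons p e, l₁, l₂, h => by
    rcases List.eq_nil_or_concat l₂ with rfl | ⟨l₂, f, rfl⟩
    · exact ⟨_, p.cons e, .nil, rfl, by simpa using h, rfl⟩
    rw [arrowList_cons, List.concat_eq_append, ← List.append_assoc] at h
    obtain ⟨h₁, h₂⟩ := List.append_inj' h rfl
    obtain ⟨c, p₁, p₂, rfl, hp₁, hp₂⟩ :=
      exists_eq_comp_of_arrowList_eq_append p l₁ l₂ h₁
    exact ⟨c, p₁, p₂.cons e, rfl, hp₁, by simp [hp₂, h₂]⟩

theorem snd_eq_fst_of_arrowList_eq {a b : V} {p : Path a b} {l₁ l₂ : List (SArrow V)}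
    {e e' : SArrow V} (h : arrowList p = l₁ ++ e :: e' :: l₂) : e.2.1 = e'.1 := by
  obtain ⟨c, p₁, p₂, -, hp₁, hp₂⟩ :=
    exists_eq_comp_of_arrowList_eq_append p (l₁ ++ [e]) (e' :: l₂) (by simpa using h)
  exact (eq_snd_of_arrowList_eq_concat hp₁).symm.trans (eq_fst_of_arrowList_eq_cons hp₂)

theorem IsSubpathP.arrowList_infix {a b c e : V} {p : Path b c} {q : Path a e}
    (h : IsSubpathP p q) : arrowList p <:+: arrowList q := by
  obtain ⟨u, w, rfl⟩ := h
  exact ⟨arrowList u, arrowList w, by simp⟩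

theorem exists_isSubpathP_of_infix {a e : V} {q : Path a e} {l : List (SArrow V)}
    (h : l <:+: arrowList q) :
    ∃ (x y : V) (p : Path x y), IsSubpathP p q ∧ arrowList p = l := by
  obtain ⟨s, t, hst⟩ := h
  obtain ⟨y, q₁, w, rfl, hq₁, rfl⟩ := exists_eq_comp_of_arrowList_eq_append q _ t hst.symm
  obtain ⟨x, u, p, rfl, rfl, rfl⟩ := exists_eq_comp_of_arrowList_eq_append q₁ s l hq₁
  exact ⟨x, y, p, ⟨u, w, rfl⟩, rfl⟩

theorem eq_of_arrowList_eq {a : V} :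
    ∀ {b a' b' : V} {p : Path a b} {p' : Path a' b'}, arrowList p = arrowList p' →
      p.length ≠ 0 → a = a' ∧ b = b' ∧ HEq p p'
  | _, _, _, .nil, _, _, h0 => absurd rfl h0
  | _, _, _, .cons p e, .nil, h, _ => by simp at h
  | _, _, _, .cons p e, .cons p' e', h, _ => by
    simp only [arrowList_cons] at h
    obtain ⟨hp, he⟩ := List.append_inj' h rfl
    obtain ⟨rfl, hee⟩ := Sigma.mk.inj_iff.mp (List.singleton_inj.mp he)
    obtain ⟨rfl, hee⟩ := Sigma.mk.inj_iff.mp (eq_of_heq hee)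
    obtain rfl := eq_of_heq hee
    rcases Nat.eq_zero_or_pos p.length with h0 | h0
    · cases p with
      | cons => simp at h0
      | nil => cases p' with
        | nil => exact ⟨rfl, rfl, HEq.rfl⟩
        | cons => simp at hp
    · obtain ⟨rfl, -, hpp⟩ := eq_of_arrowList_eq hp h0.ne'
      obtain rfl := eq_of_heq hpp
      exact ⟨rfl, rfl, HEq.rfl⟩

end ArrowList

section PathSets

def arrowWords (ρ : PathSet V) : Set (List (SArrow V)) :=
  {l | ∃ (x y : V) (q : Path x y), ρ q ∧ arrowList q = l}

variable {ρ : PathSet V} {d : ℕ}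

theorem arrowList_mem_arrowWords {x y : V} {q : Path x y} (h : ρ q) :
    arrowList q ∈ arrowWords ρ :=
  ⟨x, y, q, h, rfl⟩

theorem of_arrowList_mem_arrowWords {x y : V} {q : Path x y} (h : arrowList q ∈ arrowWords ρ)
    (hq : q.length ≠ 0) : ρ q := by
  obtain ⟨x', y', q', hq', heq⟩ := h
  obtain ⟨rfl, rfl, h⟩ :=
    eq_of_arrowList_eq heq (by rwa [← length_arrowList, heq, length_arrowList])
  exact eq_of_heq h ▸ hq'

theorem DCovering.wordCovering (hcov : DCovering d ρ) : WordCovering d (arrowWords ρ) := by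
  rintro P Q D ⟨_, _, π₁, hπ₁, h₁⟩ ⟨_, _, π₂, hπ₂, h₂⟩ hQ w hw hlen
  obtain ⟨b, p, q, rfl, rfl, hq⟩ := exists_eq_comp_of_arrowList_eq_append π₁ P Q h₁
  obtain ⟨c, q', r, rfl, hq', rfl⟩ := exists_eq_comp_of_arrowList_eq_append π₂ Q D h₂
  have hqlen : q.length ≠ 0 := by rwa [← length_arrowList, hq, ne_eq, List.length_eq_zero_iff]
  obtain ⟨rfl, rfl, hqq⟩ := eq_of_arrowList_eq (hq.trans hq'.symm) hqlen
  obtain rfl := eq_of_heq hqq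
  obtain ⟨x, y, s, hs, rfl⟩ :=
    exists_isSubpathP_of_infix (q := (p.comp q).comp r) (by simpa [hq] using hw)
  exact arrowList_mem_arrowWords
    (hcov p q r hπ₁ hπ₂ (Nat.one_le_iff_ne_zero.mpr hqlen) s (by simpa using hlen) hs)

theorem RhoTSub.of_factorsIn_pow {u : V} {C : Path u u} (hd : d ≠ 0)
    (h : ∀ m, 1 ≤ m → FactorsIn d (arrowWords ρ) (List.replicate m (arrowList C)).flatten) :
    RhoTSub d ρ C := by
  rintro x y q hq ⟨m, hm, hsub⟩
  refine of_arrowList_mem_arrowWords (h m hm _ ?_ (by simpa)) (hq ▸ hd)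
  rw [← arrowList_cpow]
  exact hsub.arrowList_infix

end PathSets

section ClosedPath

variable {a : V} {T : Path a a} (hT : arrowList T ≠ [])

theorem exists_liesOn_arrowList_eq_window (s n : ℕ) :
    ∃ (x y : V) (q : Path x y), LiesOn q T ∧
      arrowList q = window (cyclicStream (arrowList T) hT) s n := by
  have h := window_infix_flatten_replicate hT s n
  rw [← arrowList_cpow] at h
  obtain ⟨x, y, q, hq, hql⟩ := exists_isSubpathP_of_infix h
  exact ⟨x, y, q, ⟨_, by omega, hq⟩, hql⟩

theorem liesOn_of_arrowList_eq_window {x y : V} {q : Path x y} (hq : q.length ≠ 0) {s : ℕ}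
    (h : arrowList q = window (cyclicStream (arrowList T) hT) s q.length) : LiesOn q T := by
  obtain ⟨x', y', q', hq', hq'l⟩ := exists_liesOn_arrowList_eq_window hT s q.length
  obtain ⟨rfl, rfl, hqq⟩ := eq_of_arrowList_eq (h.trans hq'l.symm) hq
  exact eq_of_heq hqq ▸ hq'

theorem cyclicStream_snd_eq_fst (t : ℕ) :
    (cyclicStream (arrowList T) hT t).2.1 = (cyclicStream (arrowList T) hT (t + 1)).1 := by
  obtain ⟨x, y, q, -, hq⟩ := exists_liesOn_arrowList_eq_window hT t 2
  exact snd_eq_fst_of_arrowList_eq (l₁ := []) (l₂ := []) (by rw [hq]; simp [window])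

theorem fst_cyclicStream_eq_of_arrowList_eq {x y : V} {p : Path x y} {s k : ℕ} (hk : 1 ≤ k)
    {e : SArrow V} {rest : List (SArrow V)}
    (h : arrowList p = window (cyclicStream (arrowList T) hT) s k ++ e :: rest) :
    (cyclicStream (arrowList T) hT (s + k)).1 = e.1 := by
  obtain ⟨k, rfl⟩ : ∃ k', k = k' + 1 := ⟨k - 1, by omega⟩
  rw [window_succ'] at h
  rw [← Nat.add_assoc, ← cyclicStream_snd_eq_fst]
  exact snd_eq_fst_of_arrowList_eq (l₁ := window (cyclicStream (arrowList T) hT) s k)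
    (l₂ := rest) (by rw [h]; simp)

theorem exists_closed_liesOn_arrowList_eq_window {j L : ℕ} (hL : 1 ≤ L)
    (h : (cyclicStream (arrowList T) hT j).1 = (cyclicStream (arrowList T) hT (j + L)).1) :
    ∃ (u : V) (C : Path u u), LiesOn C T ∧
      arrowList C = window (cyclicStream (arrowList T) hT) j L := by
  obtain ⟨x, y, C, hC, hCl⟩ := exists_liesOn_arrowList_eq_window hT j L
  obtain ⟨L, rfl⟩ : ∃ L', L = L' + 1 := ⟨L - 1, by omega⟩
  have hx := eq_fst_of_arrowList_eq_cons (hCl.trans (window_succ _ j L))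
  have hy := eq_snd_of_arrowList_eq_concat (hCl.trans (window_succ' _ j L))
  obtain rfl : y = x := by rw [hy, hx, cyclicStream_snd_eq_fst, h, Nat.add_assoc]
  exact ⟨_, C, hC, hCl⟩

theorem RhoTSub.factorsIn_window {d : ℕ} {ρ : PathSet V} (hρT : RhoTSub d ρ T) (s n : ℕ) :
    FactorsIn d (arrowWords ρ) (window (cyclicStream (arrowList T) hT) s n) := by
  intro w hw hlen
  obtain ⟨t, ht⟩ := exists_eq_window_of_infix hw
  obtain ⟨x, y, q, hq, hql⟩ := exists_liesOn_arrowList_eq_window hT t d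
  rw [ht, hlen, ← hql]
  exact arrowList_mem_arrowWords (hρT q (by rw [← length_arrowList, hql, length_window]) hq)

theorem rhoTSub_subcycle_of_jump {d : ℕ} {ρ : PathSet V} (hcov : DCovering d ρ)
    (hρT : RhoTSub d ρ T) {x y : V} {p : Path x y} (hρp : ρ p) (hp : p.length = d)
    {s k j L c : ℕ} {rest : List (SArrow V)}
    (hsplit : arrowList p =
      window (cyclicStream (arrowList T) hT) s k ++ cyclicStream (arrowList T) hT j :: rest)
    (hk : 1 ≤ k) (hdj : d ≤ j) (hL : 1 ≤ L) (hjL : j + L = s + k + (arrowList T).length * c)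
    {u : V} {C : Path u u} (hC : arrowList C = window (cyclicStream (arrowList T) hT) j L) :
    RhoTSub d ρ C := by
  set f := cyclicStream (arrowList T) hT
  obtain ⟨i, rfl⟩ : ∃ i, j = i + d := ⟨j - d, by omega⟩
  obtain ⟨L, rfl⟩ : ∃ L', L = L' + 1 := ⟨L - 1, by omega⟩
  have hlen : (window f s k ++ f (i + d) :: rest).length = d := by
    rw [← hsplit, length_arrowList, hp]
  have hkd : k < d := by simp at hlen; omega
  have hX : FactorsIn d (arrowWords ρ)
      (window f i d ++ f (i + d) :: window f (i + d + 1) L ++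
        window f (i + (d + (L + 1))) d) := by
    rw [← window_succ, ← window_add, ← window_add]
    exact hρT.factorsIn_window hT i _
  -- up to a period of `T`, the part of `p` before the jump ends where `C` ends
  have hsuf : window f s k <:+ window f i d ++ f (i + d) :: window f (i + d + 1) L := by
    rw [← window_succ, ← window_add, ← window_cyclicStream_add_mul hT s c,
      show d + (L + 1) = (d + (L + 1) - k) + k by omega, window_add]
    exact ⟨_, by congr 2; omega⟩
  refine RhoTSub.of_factorsIn_pow (by omega) fun m hm => ?_
  have h := hcov.wordCovering.factorsIn_append_pow_append hX (by simp) (by simp)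
    (by rw [← List.length_pos_iff, length_window]; omega) hsuf
    (hsplit ▸ arrowList_mem_arrowWords hρp) hlen m hm
  rw [hC, window_succ]
  exact h.mono ⟨window f i d, _, rfl⟩

end ClosedPath

/-- under the stated assumptions on the closed trail `T`, any path `p` of
length `d` whose arrows all come from `T` but which does not lie on `T` is not in `ρ`. -/
theorem stmt_2 {V : Type u} [Quiver.{v + 1} V] [Fintype V] [∀ a b : V, Fintype (a ⟶ b)]
    (d : ℕ) (hd : 2 ≤ d) (ρ : PathSet V)
    (hρlen : ∀ ⦃a b : V⦄ (p : Quiver.Path a b), ρ p → p.length = d)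
    (hcov : DCovering d ρ)
    (hfd : ∀ ⦃w : V⦄ (T : Quiver.Path w w), IsClosedTrail T →
      ∃ (x y : V) (q : Quiver.Path x y), ρ q ∧ LiesOn q T)
    {a : V} (T : Quiver.Path a a) (hT : IsClosedTrail T) (hn : 2 ≤ T.length)
    (hρT : RhoTSub d ρ T)
    (hnoloop : ∀ e ∈ arrowList T, e.1 ≠ e.2.1)
    (hnosub : ∀ ⦃w : V⦄ (q : Quiver.Path w w), LiesOn q T → 2 ≤ q.length →
      q.length < T.length → ¬ RhoTSub d ρ q)
    {x y : V} (p : Quiver.Path x y) (hp : p.length = d)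
    (harr : ∀ e ∈ arrowList p, e ∈ arrowList T)
    (hnotlie : ¬ LiesOn p T) :
    ¬ ρ p := by
  intro hρp
  have hT' : arrowList T ≠ [] := by rw [← List.length_pos_iff, length_arrowList]; omega
  have hrange : ∀ e ∈ arrowList p, e ∈ Set.range (cyclicStream (arrowList T) hT') := by
    intro e he
    obtain ⟨r, -, hr⟩ := exists_lt_cyclicStream_add_eq hT' (harr e he) 0
    exact ⟨0 + r, hr⟩
  rcases eq_window_or_exists_jump _ (arrowList p)
      (by rw [← List.length_pos_iff, length_arrowList]; omega) hrange with
    ⟨s, hs⟩ | ⟨s, k, e, rest, hk, hsplit, hjump⟩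
  · exact hnotlie (liesOn_of_arrowList_eq_window hT' (by omega) (by rwa [length_arrowList] at hs))
  obtain ⟨j, L, c, hdj, hL1, hLN, rfl, hjL⟩ :=
    exists_subcycle_position hT' (harr e (by simp [hsplit])) hjump d
  have hcycle : (cyclicStream _ hT' j).1 = (cyclicStream _ hT' (j + L)).1 := by
    rw [hjL, cyclicStream_add_mul, fst_cyclicStream_eq_of_arrowList_eq hT' hk hsplit]
  obtain ⟨u, C, hClies, hC⟩ := exists_closed_liesOn_arrowList_eq_window hT' hL1 hcycle
  have hL2 : 2 ≤ L := by
    by_contra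
    obtain rfl : L = 1 := by omega
    exact hnoloop _ (cyclicStream_mem hT' j) (hcycle.trans (cyclicStream_snd_eq_fst hT' j).symm)
  have hClen : C.length = L := by rw [← length_arrowList, hC, length_window]
  exact hnosub C hClies (by omega) (by rw [length_arrowList] at hLN; omega)
    (rhoTSub_subcycle_of_jump hT' hcov hρT hρp hp hsplit hk hdj hL1 hjL hC)
end

section
/- Let Q be a finite quiver, let d ≥ 2, and let ρ be a d-covering set of paths of Q, each of length d, such that for every m ≥ 2 every element of R^m has length δ(m). Let R ∈ R^n for some n ≥ 2, and suppose that R contains a subpath of the form Tα_1, where T = α_1⋯α_k is a closed trail with k ≥ d whose arrows α_1,…,α_k are pairwise distinct and α_1 is the first arrow of T. Then every path of length d that lies on T belongs to ρ, that is, ρ_T ⊆ ρ. -/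
open Quiver

universe u v

variable {V : Type u} [Quiver.{v + 1} V]

/-!
Call the subpaths of length `d` of a path its windows; `SubpathsIn d ρ r` says that all
windows of `r` lie in `ρ`. If all windows of `XY` and of `YZ` lie in `ρ` and `ℓ(Y) ≥ d - 1`,
then so do all windows of `XYZ`, since no window can stick out of `Y` on both sides.
By induction on `n`, all windows of an element `R^{n-1}u` of `R^n` lie in `ρ`: the relation
`q = Mu` overlapping the end of `R^{n-1}` shares the nontrivial path `M` with the last `d`
arrows `W₁M` of `R^{n-1}`, so `d`-covering applied to `W₁M` and `Mu` bridges the seam.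
In `T² = Tα₁T'` the seam at the second `α₁` is bridged in the same way by covering applied to
the windows of `Tα₁` ending and starting at `α₁`; as `ℓ(T) ≥ d`, all windows of every power
of `T` then lie in `ρ`.
-/

namespace Quiver.Path

variable {a b c e : V}

theorem exists_eq_comp_of_comp_eq_comp_s5 {X : Quiver.Path a b} {Y : Quiver.Path b e}
    {Z : Quiver.Path a c} {W : Quiver.Path c e} (h : X.comp Y = Z.comp W)
    (hl : Y.length ≤ W.length) : ∃ M : Quiver.Path c b, X = Z.comp M ∧ W = M.comp Y := by
  induction Y with
  | nil => exact ⟨W, by simpa using h, W.comp_nil.symm⟩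
  | cons Y e ih =>
    cases W with
    | nil => simp at hl
    | cons W f =>
      obtain rfl := obj_eq_of_cons_eq_cons h
      obtain rfl := eq_of_heq (hom_heq_of_cons_eq_cons h)
      obtain ⟨M, rfl, rfl⟩ := ih (eq_of_heq (heq_of_cons_eq_cons h)) (by simpa using hl)
      exact ⟨M, rfl, rfl⟩

theorem exists_eq_comp_length_right (r : Quiver.Path a b) :
    ∀ k ≤ r.length, ∃ (c : V) (p : Quiver.Path a c) (q : Quiver.Path c b),
      r = p.comp q ∧ q.length = k := by
  induction r with
  | nil => exact fun k hk => ⟨a, .nil, .nil, rfl, by rw [length_nil] at hk ⊢; omega⟩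
  | cons r e ih =>
    rintro (_ | k) hk
    · exact ⟨_, _, .nil, rfl, rfl⟩
    · obtain ⟨c, p, q, rfl, rfl⟩ := ih k (by simpa using hk)
      exact ⟨c, p, q.cons e, rfl, rfl⟩

theorem exists_eq_comp_length_left (r : Quiver.Path a b) (k : ℕ) (hk : k ≤ r.length) :
    ∃ (c : V) (p : Quiver.Path a c) (q : Quiver.Path c b), r = p.comp q ∧ p.length = k := by
  obtain ⟨c, p, q, rfl, hq⟩ := r.exists_eq_comp_length_right (r.length - k) (Nat.sub_le _ _)
  exact ⟨c, p, q, rfl, by simp only [length_comp] at hk hq; omega⟩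

end Quiver.Path

open Quiver.Path

section Subpath

variable {a b c e x y : V}

theorem IsSubpathP.trans {p : Quiver.Path x y} {q : Quiver.Path b c} {r : Quiver.Path a e}
    (hpq : IsSubpathP p q) (hqr : IsSubpathP q r) : IsSubpathP p r := by
  obtain ⟨u₁, v₁, rfl⟩ := hpq
  obtain ⟨u₂, v₂, rfl⟩ := hqr
  exact ⟨u₂.comp u₁, v₁.comp v₂, by simp only [comp_assoc]⟩

theorem IsSubpathP.of_comp_left {p : Quiver.Path a b} {q : Quiver.Path b e}
    {g : Quiver.Path a x} {s : Quiver.Path x y} {h : Quiver.Path y e}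
    (heq : (g.comp s).comp h = p.comp q) (hl : q.length ≤ h.length) : IsSubpathP s p := by
  obtain ⟨M, hM, -⟩ := exists_eq_comp_of_comp_eq_comp_s5 heq.symm hl
  exact ⟨g, M, hM⟩

theorem IsSubpathP.of_comp_right {p : Quiver.Path a b} {q : Quiver.Path b e}
    {g : Quiver.Path a x} {s : Quiver.Path x y} {h : Quiver.Path y e}
    (heq : (g.comp s).comp h = p.comp q) (hl : p.length ≤ g.length) : IsSubpathP s q := by
  rw [comp_assoc] at heq
  have hlen := congrArg Quiver.Path.length heq
  simp only [length_comp] at hlen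
  obtain ⟨M, -, rfl⟩ := exists_eq_comp_of_comp_eq_comp_s5 heq
    (by simp only [length_comp]; omega)
  exact ⟨M, h, (comp_assoc _ _ _).symm⟩

end Subpath

def SubpathsIn (d : ℕ) (ρ : PathSet V) {a b : V} (r : Quiver.Path a b) : Prop :=
  ∀ ⦃x y : V⦄ (s : Quiver.Path x y), s.length = d → IsSubpathP s r → ρ s

namespace SubpathsIn

variable {d : ℕ} {ρ : PathSet V} {a b c e : V}

theorem mono {r : Quiver.Path a b} {r' : Quiver.Path c e} (h : SubpathsIn d ρ r)
    (hsub : IsSubpathP r' r) : SubpathsIn d ρ r' :=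
  fun _ _ s hs hsr' => h s hs (hsr'.trans hsub)

theorem of_length_eq {r : Quiver.Path a b} (hr : ρ r) (hlen : r.length = d) :
    SubpathsIn d ρ r := by
  rintro x y s hs ⟨g, h, rfl⟩
  simp only [length_comp] at hlen
  cases g with
  | cons => simp only [length_cons] at hlen; omega
  | nil => cases h with
    | cons => simp only [length_cons] at hlen; omega
    | nil => simpa using hr

theorem comp {X : Quiver.Path a b} {Y : Quiver.Path b c} {Z : Quiver.Path c e}
    (hXY : SubpathsIn d ρ (X.comp Y)) (hYZ : SubpathsIn d ρ (Y.comp Z))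
    (hY : d ≤ Y.length + 1) : SubpathsIn d ρ ((X.comp Y).comp Z) := by
  rintro x y s hs ⟨g, h, heq⟩
  by_cases hZ : Z.length ≤ h.length
  · exact hXY s hs (.of_comp_left heq.symm hZ)
  · have hlen := congrArg Quiver.Path.length heq
    simp only [length_comp] at hlen
    rw [comp_assoc X] at heq
    exact hYZ s hs (.of_comp_right heq.symm (by omega))

theorem cpow_succ {T : Quiver.Path a a} (hTT : SubpathsIn d ρ (T.comp T))
    (hT : d ≤ T.length + 1) : ∀ m, SubpathsIn d ρ (cpow T (m + 1))
  | 0 => hTT.mono ⟨.nil, T, by simp [cpow]⟩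
  | m + 1 => comp (cpow_succ hTT hT m) hTT hT

theorem rhoTSub {T : Quiver.Path a a} (hTT : SubpathsIn d ρ (T.comp T))
    (hT : d ≤ T.length + 1) : RhoTSub d ρ T := by
  rintro x y q hq ⟨_ | m, hm, hsub⟩
  · omega
  · exact cpow_succ hTT hT m q hq hsub

theorem comp_self_of_comp_toPath (hcov : DCovering d ρ) (hd : 1 ≤ d) {T : Quiver.Path a a}
    (hTd : d ≤ T.length) {α : a ⟶ b} {T' : Quiver.Path b a} (hT : T = α.toPath.comp T')
    (hTα : SubpathsIn d ρ (T.comp α.toPath)) : SubpathsIn d ρ (T.comp T) := by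
  have hT' : T'.length + 1 = T.length := by rw [hT, length_comp, length_toPath]; omega
  obtain ⟨_, P, pre, hP, hpre⟩ := T.exists_eq_comp_length_right (d - 1) (by omega)
  obtain ⟨_, post, T₂, hT₂, hpost⟩ := T'.exists_eq_comp_length_left (d - 1) (by omega)
  have hpreα : ρ (pre.comp α.toPath) :=
    hTα _ (by rw [length_comp, hpre, length_toPath]; omega)
      ⟨P, .nil, by rw [hP, comp_nil, comp_assoc]⟩
  have hαpost : ρ (α.toPath.comp post) :=
    hTα _ (by rw [length_comp, hpost, length_toPath]; omega)
      ⟨.nil, T₂.comp α.toPath, by rw [nil_comp, hT, hT₂]; simp only [comp_assoc]⟩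
  have hTpost : SubpathsIn d ρ (T.comp (α.toPath.comp post)) := by
    have := comp (by rwa [hP, comp_assoc] at hTα)
      (hcov _ _ _ hpreα hαpost (by rw [length_toPath]))
      (by rw [length_comp, hpre, length_toPath]; omega)
    rw [hP]; simpa only [comp_assoc] using this
  have hTtail : SubpathsIn d ρ ((α.toPath.comp post).comp T₂) :=
    hTα.mono ⟨.nil, α.toPath, by rw [nil_comp, hT, hT₂]; simp only [comp_assoc]⟩
  have := comp hTpost hTtail (by rw [length_comp, hpost, length_toPath]; omega)
  nth_rw 2 [hT]
  rw [hT₂]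
  simpa only [comp_assoc] using this

end SubpathsIn

theorem le_deltaF {m : ℕ} (d : ℕ) (hm : 2 ≤ m) : d ≤ deltaF d m := by
  unfold deltaF
  split_ifs
  · exact Nat.le_mul_of_pos_left d (by omega)
  · exact (Nat.le_mul_of_pos_left d (by omega)).trans (Nat.le_succ _)

section RSet

variable {d : ℕ} {ρ : PathSet V}

theorem SubpathsIn.comp_of_overlapsWith (hcov : DCovering d ρ) {a b c x e : V}
    {Rpp : Quiver.Path a b} {p : Quiver.Path b c} (hRp : SubpathsIn d ρ (Rpp.comp p))
    (hRpd : d ≤ (Rpp.comp p).length) {q : Quiver.Path x e} (hq : ρ q) (hqd : q.length = d)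
    {u : Quiver.Path c e} (hov : OverlapsWith q p u) : SubpathsIn d ρ ((Rpp.comp p).comp u) := by
  obtain ⟨v, hpu, -, hu⟩ := hov
  obtain ⟨M, rfl, rfl⟩ := exists_eq_comp_of_comp_eq_comp_s5 hpu hu.le
  simp only [length_comp] at hRpd hu hqd
  obtain ⟨_, X, W₁, hX, hW₁⟩ := (Rpp.comp v).exists_eq_comp_length_right u.length (by
    simp only [length_comp]; omega)
  have hRp' : Rpp.comp (v.comp M) = X.comp (W₁.comp M) := by rw [← comp_assoc, hX, comp_assoc]
  rw [hRp'] at hRp ⊢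
  have hW : ρ (W₁.comp M) := hRp _ (by simp only [length_comp]; omega) ⟨X, .nil, rfl⟩
  have := comp (X := X) hRp (hcov _ _ _ hW hq (by omega))
    (by simp only [length_comp]; omega)
  simpa only [comp_assoc] using this

theorem SubpathsIn.of_RSet (hρlen : ∀ ⦃a b : V⦄ (p : Quiver.Path a b), ρ p → p.length = d)
    (hcov : DCovering d ρ)
    (hRlen : ∀ m, 2 ≤ m → ∀ ⦃a b : V⦄ (p : Quiver.Path a b), RSet ρ m p →
      p.length = deltaF d m) :
    ∀ n ⦃a b : V⦄ (R : Quiver.Path a b), RSet ρ (n + 2) R → SubpathsIn d ρ R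
  | 0, _, _, R, hR => .of_length_eq hR (hρlen R hR)
  | n + 1, _, _, _, hR => by
    obtain ⟨_, _, u, hRp, rfl, _, Rpp, p, -, rfl, ⟨_, q, hq, hov⟩, -⟩ := hR
    exact (SubpathsIn.of_RSet hρlen hcov hRlen n _ hRp).comp_of_overlapsWith hcov
      ((hRlen _ (by omega) _ hRp).symm ▸ le_deltaF d (by omega)) hq (hρlen q hq) hov

end RSet

/-- if `R ∈ R^n` (`n ≥ 2`) contains a subpath `Tα₁` where `T` is a closed
trail of length `k ≥ d` with first arrow `α₁`, then `ρ_T ⊆ ρ`. -/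
theorem stmt_5 {V : Type u} [Quiver.{v + 1} V] [Fintype V] [∀ a b : V, Fintype (a ⟶ b)]
    (d : ℕ) (hd : 2 ≤ d) (ρ : PathSet V)
    (hρlen : ∀ ⦃a b : V⦄ (p : Quiver.Path a b), ρ p → p.length = d)
    (hcov : DCovering d ρ)
    (hRlen : ∀ m, 2 ≤ m → ∀ ⦃a b : V⦄ (p : Quiver.Path a b), RSet ρ m p →
      p.length = deltaF d m)
    (n : ℕ) (hn : 2 ≤ n) {a b : V} (R : Quiver.Path a b) (hR : RSet ρ n R)
    {u w : V} (T : Quiver.Path u u) (hT : IsClosedTrail T) (hk : d ≤ T.length)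
    (α : u ⟶ w) (T' : Quiver.Path w u) (hfirst : T = (Quiver.Hom.toPath α).comp T')
    (hsub : IsSubpathP (T.comp (Quiver.Hom.toPath α)) R) :
    RhoTSub d ρ T := by
  obtain ⟨n, rfl⟩ := Nat.exists_eq_add_of_le' hn
  have hTα : SubpathsIn d ρ (T.comp α.toPath) :=
    (SubpathsIn.of_RSet hρlen hcov hRlen n R hR).mono hsub
  exact (hTα.comp_self_of_comp_toPath hcov (by omega) hk hfirst).rhoTSub (by omega)
end

section
/- Let Q be a finite quiver, let D = dA with d ≥ 2 and A ≥ 1, and let ρ be a set of paths of Q satisfying the (D,A)-overlap property. Suppose R_2 ∈ ρ properly overlaps R_1 ∈ ρ with overlap R_1u. Then ℓ(u) is a multiple of A, so that R_1u is an A-path; every A-subpath of R_1u of A-length d belongs to ρ; and no subpath of R_1u of length D other than these A-subpaths belongs to ρ. -/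
open Quiver

universe u v

variable {V : Type u} [Quiver.{v + 1} V]

section Aux
variable {V : Type u} [Quiver.{v + 1} V]

theorem path_eq_nil' {a b : V} (p : Quiver.Path a b) (h : p.length = 0) :
    ∃ _ : a = b, HEq p (Quiver.Path.nil : Quiver.Path a a) := by
  cases p with
  | nil => exact ⟨rfl, HEq.rfl⟩
  | cons q e => simp [Quiver.Path.length] at h

theorem comp_inj_suffix' {a : V} : ∀ {b b' c : V} (q : Quiver.Path b c) (q' : Quiver.Path b' c)
    (p : Quiver.Path a b) (p' : Quiver.Path a b'),
    q.length = q'.length → p.comp q = p'.comp q' → b = b' ∧ HEq p p' ∧ HEq q q'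
  | _, b', _, .nil, q', p, p', hl, he => by
    cases q' with
    | nil =>
      rw [Quiver.Path.comp_nil, Quiver.Path.comp_nil] at he
      exact ⟨rfl, heq_of_eq he, HEq.rfl⟩
    | cons q'' e => simp [Quiver.Path.length] at hl
  | _, b', _, .cons q e, q', p, p', hl, he => by
    cases q' with
    | nil => simp [Quiver.Path.length] at hl
    | cons q'' e' =>
      rw [Quiver.Path.comp_cons, Quiver.Path.comp_cons] at he
      injection he with hm _ hpaths harrows
      subst hm
      obtain ⟨hb, hp, hq⟩ := comp_inj_suffix' q q'' p p' (by simpa using hl) (eq_of_heq hpaths)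
      subst hb
      rw [eq_of_heq hq, eq_of_heq harrows]
      exact ⟨rfl, hp, HEq.rfl⟩

theorem comp_inj_prefix' {a c b b' : V} (p : Quiver.Path a b) (p' : Quiver.Path a b')
    (q : Quiver.Path b c) (q' : Quiver.Path b' c)
    (hl : p.length = p'.length) (he : p.comp q = p'.comp q') :
    b = b' ∧ HEq p p' ∧ HEq q q' := by
  have hlen := congrArg Quiver.Path.length he
  rw [Quiver.Path.length_comp, Quiver.Path.length_comp] at hlen
  exact comp_inj_suffix' q q' p p' (by omega) he

theorem exists_split' {a b : V} (p : Quiver.Path a b) (n : ℕ) (hn : n ≤ p.length) :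
    ∃ (c : V) (q : Quiver.Path a c) (r : Quiver.Path c b), p = q.comp r ∧ q.length = n := by
  induction p with
  | nil => exact ⟨a, .nil, .nil, rfl, by simpa using (Nat.le_zero.mp hn).symm⟩
  | cons p e ih =>
    rcases Nat.lt_or_ge n (p.length + 1) with h | h
    · obtain ⟨c, q, r, hpe, hq⟩ := ih (by omega)
      exact ⟨c, q, r.cons e, by rw [hpe]; rfl, hq⟩
    · have hn' : n = p.length + 1 := le_antisymm (by simpa [Quiver.Path.length] using hn) h
      exact ⟨_, p.cons e, .nil, (Quiver.Path.comp_nil _).symm, by simp [Quiver.Path.length, hn']⟩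

theorem isAPath_of_dvd' (A : ℕ) (hA : 1 ≤ A) :
    ∀ (n : ℕ) {a b : V} (p : Quiver.Path a b), p.length = n → A ∣ n → IsAPath A p := by
  intro n
  induction n using Nat.strong_induction_on with
  | _ n ih =>
    intro a b p hp hdvd
    rcases Nat.eq_zero_or_pos n with rfl | hpos
    · obtain ⟨rfl, hh⟩ := path_eq_nil' p hp
      rw [eq_of_heq hh]
      exact ⟨[], SegChain.nil a⟩
    · have hAn : A ≤ n := Nat.le_of_dvd hpos hdvd
      obtain ⟨c, q, r, hpe, hq⟩ := exists_split' p A (by omega)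
      have hr : r.length = n - A := by
        have := congrArg Quiver.Path.length hpe
        rw [Quiver.Path.length_comp] at this; omega
      obtain ⟨L, hL⟩ := ih (n - A) (by omega) r hr (Nat.dvd_sub hdvd dvd_rfl)
      rw [hpe]
      exact ⟨_, SegChain.cons q hq hL⟩

theorem key_lemma (D A d : ℕ) (hd : 2 ≤ d) (hA : 1 ≤ A) (hD : D = d * A)
    (ρ : PathSet V) (hDA : DAOverlapProperty D A ρ) :
    ∀ (n : ℕ) ⦃a b x y : V⦄ (R₁ : Quiver.Path a b) (R₂ : Quiver.Path x y)
      (u : Quiver.Path b y), u.length = n → ρ R₁ → ρ R₂ →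
      ProperlyOverlapsWith R₂ R₁ u →
      A ∣ u.length ∧
      (∀ ⦃x' y' : V⦄ (s : Quiver.Path x' y'), IsASubpath A s (R₁.comp u) →
        s.length = D → ρ s) := by
  intro n
  induction n using Nat.strong_induction_on with
  | _ n ih =>
  intro a b x y R₁ R₂ u hn h₁ h₂ hov
  have hR₁D : R₁.length = D := hDA.1 R₁ h₁
  have hR₂D : R₂.length = D := hDA.1 R₂ h₂
  obtain ⟨hAle, y₃, x₃, R₃, u', hρ₃, hov₃, hu'A, hpre⟩ := hDA.2 R₁ R₂ u h₁ h₂ hov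
  obtain ⟨w, hw⟩ := hpre
  obtain ⟨v₂, he₂, hu1, huR₂, hv₂1⟩ := hov
  obtain ⟨v₃, he₃, -, -, hv₃1⟩ := hov₃
  have hR₃D : R₃.length = D := hDA.1 R₃ hρ₃
  have hlv₂ : v₂.length = u.length := by
    have := congrArg Quiver.Path.length he₂
    rw [Quiver.Path.length_comp, Quiver.Path.length_comp] at this; omega
  have hlv₃ : v₃.length = A := by
    have := congrArg Quiver.Path.length he₃
    rw [Quiver.Path.length_comp, Quiver.Path.length_comp] at this; omega
  have hlw : u.length = A + w.length := by
    have := congrArg Quiver.Path.length hw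
    rw [Quiver.Path.length_comp] at this; omega
  have huD : u.length < D := by omega
  rcases Nat.eq_zero_or_pos w.length with hw0 | hwpos
  · -- base case: u = u', length A
    obtain ⟨rfl, hwnil⟩ := path_eq_nil' w hw0
    rw [eq_of_heq hwnil, Quiver.Path.comp_nil] at hw
    subst hw
    constructor
    · rw [hlw, hw0]; simp
    · intro x' y' s hsub hsD
      obtain ⟨p, q, heq, hdp, hAs⟩ := hsub
      have hlens := congrArg Quiver.Path.length heq
      rw [Quiver.Path.length_comp, Quiver.Path.length_comp,
        Quiver.Path.length_comp] at hlens
      rcases Nat.eq_zero_or_pos p.length with hp0 | hppos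
      · obtain ⟨rfl, hpnil⟩ := path_eq_nil' p hp0
        rw [eq_of_heq hpnil, Quiver.Path.nil_comp] at heq
        obtain ⟨hb, hhs, -⟩ := comp_inj_prefix' R₁ s u q (by omega) heq
        subst hb
        rw [eq_of_heq hhs] at h₁
        exact h₁
      · have hpA : A ≤ p.length := Nat.le_of_dvd hppos hdp
        have hq0 : q.length = 0 := by omega
        obtain ⟨rfl, hqnil⟩ := path_eq_nil' q hq0
        rw [eq_of_heq hqnil, Quiver.Path.comp_nil] at heq
        obtain ⟨hb, -, hhs⟩ := comp_inj_prefix' p v₂ s R₂ (by omega) (heq.symm.trans he₂)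
        subst hb
        rw [eq_of_heq hhs]
        exact h₂
  · -- inductive case
    have hleft : R₁.comp u = v₃.comp (R₃.comp w) := by
      rw [hw, ← Quiver.Path.comp_assoc, he₃, Quiver.Path.comp_assoc]
    obtain ⟨m, t, v₂', hv₂eq, htA⟩ := exists_split' v₂ A (by omega)
    have hlv₂' : v₂'.length = w.length := by
      have := congrArg Quiver.Path.length hv₂eq
      rw [Quiver.Path.length_comp] at this; omega
    have hbig : v₃.comp (R₃.comp w) = t.comp (v₂'.comp R₂) := by
      rw [← hleft, he₂, hv₂eq, Quiver.Path.comp_assoc]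
    obtain ⟨hx₃, -, hkey⟩ :=
      comp_inj_prefix' v₃ t (R₃.comp w) (v₂'.comp R₂) (by omega) hbig
    subst hx₃
    have hkey' : R₃.comp w = v₂'.comp R₂ := eq_of_heq hkey
    have hovw : ProperlyOverlapsWith R₂ R₃ w := ⟨v₂', hkey', by omega, by omega, by omega⟩
    obtain ⟨hdvdw, hsubw⟩ := ih w.length (by omega) R₃ R₂ w rfl hρ₃ h₂ hovw
    constructor
    · rw [hlw]
      exact Nat.dvd_add dvd_rfl hdvdw
    · intro x' y' s hsub hsD
      obtain ⟨p, q, heq, hdp, hAs⟩ := hsub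
      rcases Nat.eq_zero_or_pos p.length with hp0 | hppos
      · obtain ⟨rfl, hpnil⟩ := path_eq_nil' p hp0
        rw [eq_of_heq hpnil, Quiver.Path.nil_comp] at heq
        obtain ⟨hb, hhs, -⟩ := comp_inj_prefix' R₁ s u q (by omega) heq
        subst hb
        rw [eq_of_heq hhs] at h₁
        exact h₁
      · obtain ⟨m₂, p₁, p₂, hpeq, hp₁A⟩ := exists_split' p A (Nat.le_of_dvd hppos hdp)
        have hlp₂ : p₂.length = p.length - A := by
          have := congrArg Quiver.Path.length hpeq
          rw [Quiver.Path.length_comp] at this; omega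
        have heq2 : R₁.comp u = p₁.comp ((p₂.comp s).comp q) := by
          rw [heq, hpeq]
          simp [Quiver.Path.comp_assoc]
        obtain ⟨hx₃', -, hkey2⟩ :=
          comp_inj_prefix' v₃ p₁ (R₃.comp w) ((p₂.comp s).comp q) (by omega)
            (hleft.symm.trans heq2)
        subst hx₃'
        refine hsubw s ⟨p₂, q, eq_of_heq hkey2, ?_, hAs⟩ hsD
        rw [hlp₂]
        exact Nat.dvd_sub hdp dvd_rfl

end Aux
/-- with the `(D,A)`-overlap property, in a proper overlap `R₁u` of two
elements of `ρ`, `ℓ(u)` is a multiple of `A`, `R₁u` is an `A`-path, every `A`-subpath of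
`R₁u` of `A`-length `d` belongs to `ρ`, and no other subpath of `R₁u` of length `D`
belongs to `ρ`. -/
theorem stmt_8 {V : Type u} [Quiver.{v + 1} V] [Fintype V] [∀ a b : V, Fintype (a ⟶ b)]
    (D A d : ℕ) (hd : 2 ≤ d) (hA : 1 ≤ A) (hD : D = d * A)
    (ρ : PathSet V) (hDA : DAOverlapProperty D A ρ)
    {a b x y : V} (R₁ : Quiver.Path a b) (R₂ : Quiver.Path x y) (u : Quiver.Path b y)
    (h₁ : ρ R₁) (h₂ : ρ R₂) (hov : ProperlyOverlapsWith R₂ R₁ u) :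
    A ∣ u.length ∧ IsAPath A (R₁.comp u) ∧
    (∀ ⦃x' y' : V⦄ (s : Quiver.Path x' y'), IsASubpath A s (R₁.comp u) →
      s.length = D → ρ s) ∧
    (∀ ⦃x' y' : V⦄ (s : Quiver.Path x' y'), IsSubpathP s (R₁.comp u) →
      s.length = D → ρ s → IsASubpath A s (R₁.comp u)) := by
  have hR₁D : R₁.length = D := hDA.1 R₁ h₁
  have hR₂D : R₂.length = D := hDA.1 R₂ h₂
  obtain ⟨hdvd, hsub⟩ := key_lemma D A d hd hA hD ρ hDA u.length R₁ R₂ u rfl h₁ h₂ hov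
  obtain ⟨v₂, he₂, hu1, huR₂, hv₂1⟩ := hov
  have huD : u.length < D := by omega
  have hAD : A ∣ D := ⟨d, by rw [hD, Nat.mul_comm]⟩
  refine ⟨hdvd, ?_, fun x' y' s hsub' hsD => hsub s hsub' hsD, ?_⟩
  · refine isAPath_of_dvd' A hA (R₁.comp u).length (R₁.comp u) rfl ?_
    rw [Quiver.Path.length_comp, hR₁D]
    exact Nat.dvd_add hAD hdvd
  · intro x' y' s hsp hsD hρs
    obtain ⟨t, v, heq⟩ := hsp
    have hlens := congrArg Quiver.Path.length heq
    rw [Quiver.Path.length_comp, Quiver.Path.length_comp,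
      Quiver.Path.length_comp] at hlens
    refine ⟨t, v, heq, ?_, isAPath_of_dvd' A hA D s hsD hAD⟩
    rcases Nat.eq_zero_or_pos t.length with h0 | hpos
    · rw [h0]
      exact Nat.dvd_zero A
    · obtain ⟨m, u₁, u₂, hueq, hu₁⟩ := exists_split' u t.length (by omega)
      have hlu₂ : u₂.length = u.length - t.length := by
        have := congrArg Quiver.Path.length hueq
        rw [Quiver.Path.length_comp] at this; omega
      rw [hueq] at heq
      rw [← Quiver.Path.comp_assoc] at heq
      obtain ⟨hm, hh, -⟩ := comp_inj_prefix' (R₁.comp u₁) (t.comp s) u₂ v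
        (by rw [Quiver.Path.length_comp, Quiver.Path.length_comp]; omega) heq
      subst hm
      have hps : R₁.comp u₁ = t.comp s := eq_of_heq hh
      have hovs : ProperlyOverlapsWith s R₁ u₁ := ⟨t, hps, by omega, by omega, by omega⟩
      have hdvd1 := (key_lemma D A d hd hA hD ρ hDA u₁.length R₁ s u₁ rfl h₁ hρs hovs).1
      rwa [hu₁] at hdvd1
end
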